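/- If a 3×3 positive definite correlation matrix has exactly one negative off-diagonal correlation (the other two strictly positive), then δ123 < 0, i.e. the triple is a synergy. -/

import Mathlib

open Real

noncomputable def corrMat (ρ12 ρ13 ρ23 : ℝ) : Matrix (Fin 3) (Fin 3) ℝ :=
  !![1, ρ12, ρ13; ρ12, 1, ρ23; ρ13, ρ23, 1]

noncomputable def gaussEnt (ρ12 ρ13 ρ23 : ℝ) (A : Finset (Fin 3)) : ℝ :=
  (1 / 2) * Real.log
    (((corrMat ρ12 ρ13 ρ23).submatrix
        (fun i : A => (i : Fin 3)) (fun j : A => (j : Fin 3))).det)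

noncomputable def delta123 (ρ12 ρ13 ρ23 : ℝ) : ℝ :=
  gaussEnt ρ12 ρ13 ρ23 {0, 1, 2}
    - gaussEnt ρ12 ρ13 ρ23 {0, 1} - gaussEnt ρ12 ρ13 ρ23 {0, 2}
    - gaussEnt ρ12 ρ13 ρ23 {1, 2}
    + gaussEnt ρ12 ρ13 ρ23 {0} + gaussEnt ρ12 ρ13 ρ23 {1}
    + gaussEnt ρ12 ρ13 ρ23 {2}

noncomputable def partialCorr (ρ12 ρ13 ρ23 : ℝ) : ℝ :=
  (ρ12 - ρ13 * ρ23) / Real.sqrt ((1 - ρ13 ^ 2) * (1 - ρ23 ^ 2))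

/-!
With `C = corrMat ρ₁₂ ρ₁₃ ρ₂₃`, the singletons contribute nothing and
`δ₁₂₃ = ½ (log det C - log (1 - ρ₁₂²) - log (1 - ρ₁₃²) - log (1 - ρ₂₃²))`.
Positive definiteness makes `det C` and the 2×2 principal minors `1 - ρᵢⱼ²` positive, and
`(1 - ρ₁₂²)(1 - ρ₁₃²)(1 - ρ₂₃²) - det C = ρ₁₂²ρ₁₃²(1 - ρ₂₃²) + ρ₁₂²ρ₂₃² + ρ₁₃²ρ₂₃² - 2ρ₁₂ρ₁₃ρ₂₃`
is positive as soon as `ρ₁₂ρ₁₃ρ₂₃ < 0`, i.e. when exactly one correlation is negative.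
-/

namespace Matrix

variable {ι R : Type*} [DecidableEq ι] [CommRing R] (M : Matrix ι ι R)

theorem det_submatrix_coe_singleton (i : ι) :
    (M.submatrix ((↑) : ({i} : Finset ι) → ι) (↑)).det = M i i := by
  rw [det_unique]
  rfl

theorem det_submatrix_coe_pair {i j : ι} (hij : i ≠ j) :
    (M.submatrix ((↑) : ({i, j} : Finset ι) → ι) (↑)).det = M i i * M j j - M i j * M j i := by
  let e : Fin 2 ≃ ({i, j} : Finset ι) :=
    Equiv.ofBijective (fun k => ⟨![i, j] k, by fin_cases k <;> simp⟩) <| by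
      refine ⟨fun k l hkl => ?_, fun ⟨x, hx⟩ => ?_⟩
      · have hkl := congrArg Subtype.val hkl
        fin_cases k <;> fin_cases l <;> simp at hkl ⊢
        exacts [hij hkl, hij hkl.symm]
      · rcases Finset.mem_insert.1 hx with rfl | hx
        · exact ⟨0, rfl⟩
        · exact ⟨1, by simp_all⟩
  rw [← det_submatrix_equiv_self e, submatrix_submatrix, det_fin_two]
  rfl

theorem det_submatrix_coe_of_forall_mem [Fintype ι] {A : Finset ι} (hA : ∀ x, x ∈ A) :
    (M.submatrix ((↑) : A → ι) (↑)).det = M.det :=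
  det_submatrix_equiv_self (Equiv.subtypeUnivEquiv hA) M

end Matrix

theorem corrMat_det (a b c : ℝ) :
    (corrMat a b c).det = 1 - a ^ 2 - b ^ 2 - c ^ 2 + 2 * a * b * c := by
  simp only [corrMat, Matrix.det_fin_three, Matrix.of_apply, Matrix.cons_val', Matrix.cons_val_zero,
    Matrix.cons_val_one, Matrix.cons_val_two, Matrix.head_cons, Matrix.tail_cons,
    Matrix.empty_val', Matrix.cons_val_fin_one, Matrix.head_fin_const]
  ring

theorem delta123_eq (a b c : ℝ) :
    delta123 a b c = (1 / 2) * (log (corrMat a b c).det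
      - log (1 - a ^ 2) - log (1 - b ^ 2) - log (1 - c ^ 2)) := by
  simp only [delta123, gaussEnt, Matrix.det_submatrix_coe_singleton,
    Matrix.det_submatrix_coe_pair _ (by decide : (0 : Fin 3) ≠ 1),
    Matrix.det_submatrix_coe_pair _ (by decide : (0 : Fin 3) ≠ 2),
    Matrix.det_submatrix_coe_pair _ (by decide : (1 : Fin 3) ≠ 2),
    Matrix.det_submatrix_coe_of_forall_mem _ (by decide : ∀ x : Fin 3, x ∈ ({0, 1, 2} : Finset _)),
    corrMat, Matrix.of_apply, Matrix.cons_val', Matrix.cons_val_zero, Matrix.cons_val_one,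
    Matrix.cons_val, Matrix.cons_val_fin_one, ← sq, one_pow, log_one]
  ring

theorem one_sub_sq_pos_of_corrMat_posDef {a b c : ℝ} (hpd : (corrMat a b c).PosDef) :
    0 < 1 - a ^ 2 ∧ 0 < 1 - b ^ 2 ∧ 0 < 1 - c ^ 2 := by
  have minor_pos (A : Finset (Fin 3)) :=
    (hpd.submatrix (Subtype.val_injective (p := (· ∈ A)))).det_pos
  refine ⟨?_, ?_, ?_⟩
  · simpa [Matrix.det_submatrix_coe_pair _ (by decide : (0 : Fin 3) ≠ 1), corrMat, sq]
      using minor_pos {0, 1}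
  · simpa [Matrix.det_submatrix_coe_pair _ (by decide : (0 : Fin 3) ≠ 2), corrMat, sq]
      using minor_pos {0, 2}
  · simpa [Matrix.det_submatrix_coe_pair _ (by decide : (1 : Fin 3) ≠ 2), corrMat, sq]
      using minor_pos {1, 2}

theorem corrMat_det_lt {a b c : ℝ} (habc : a * b * c < 0) (hc : c ^ 2 ≤ 1) :
    (corrMat a b c).det < (1 - a ^ 2) * (1 - b ^ 2) * (1 - c ^ 2) := by
  rw [corrMat_det]
  nlinarith [mul_nonneg (sq_nonneg (a * b)) (sub_nonneg.2 hc), sq_nonneg (a * c), sq_nonneg (b * c)]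

theorem stmt_14 (ρ12 ρ13 ρ23 : ℝ) (hpd : (corrMat ρ12 ρ13 ρ23).PosDef)
    (hneg : (ρ12 < 0 ∧ 0 < ρ13 ∧ 0 < ρ23)
      ∨ (ρ13 < 0 ∧ 0 < ρ12 ∧ 0 < ρ23)
      ∨ (ρ23 < 0 ∧ 0 < ρ12 ∧ 0 < ρ13)) :
    delta123 ρ12 ρ13 ρ23 < 0 := by
  obtain ⟨h12, h13, h23⟩ := one_sub_sq_pos_of_corrMat_posDef hpd
  have hprod : ρ12 * ρ13 * ρ23 < 0 := by
    rcases hneg with ⟨hn, hp, hq⟩ | ⟨hn, hp, hq⟩ | ⟨hn, hp, hq⟩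
    · exact mul_neg_of_neg_of_pos (mul_neg_of_neg_of_pos hn hp) hq
    · exact mul_neg_of_neg_of_pos (mul_neg_of_pos_of_neg hp hn) hq
    · exact mul_neg_of_pos_of_neg (mul_pos hp hq) hn
  have hlog := log_lt_log hpd.det_pos (corrMat_det_lt hprod (by linarith))
  rw [log_mul (by positivity) (by positivity), log_mul (by positivity) (by positivity)]
    at hlog
  rw [delta123_eq]
  linarith
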